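/- Let L₄(a,b) = a²(1-a)²/(4b²) + (11-26a(1-a))/60 + 2b²/15 - (1/20)(b²/(a²+b²) + b²/((1-a)²+b²)). Then for all 0 ≤ a ≤ 1/2, 0 < b ≤ 1, and all ã with 0 ≤ ã ≤ 1/2, |ã-a| ≤ b/50, and all b̃ with 0 < b̃ ≤ 1, |b̃-b| ≤ b/50: |∂L₄/∂a(a,b)| < (3/b)·L₄(a,b), ∂²L₄/∂a²(ã,b) < (9/b²)·L₄(a,b), |∂L₄/∂b(a,b)| < (3/b)·L₄(a,b), and ∂²L₄/∂b²(a,b̃) < (9/b²)·L₄(a,b). -/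

import Mathlib

set_option maxHeartbeats 1000000

noncomputable def L4 (a b : ℝ) : ℝ := a^2*(1 - a)^2/(4*b^2) + (11 - 26*a*(1 - a))/60 + 2*b^2/15 - (1/20)*(b^2/(a^2 + b^2) + b^2/((1 - a)^2 + b^2))

noncomputable def Fa (a b : ℝ) : ℝ := (1-2*a)*(a*(1-a)/(2*b^2) - 13/30) + b^2/10*(a/(a^2+b^2)^2 - (1-a)/((1-a)^2+b^2)^2)

noncomputable def Faa (a b : ℝ) : ℝ := (1-6*a+6*a^2)/(2*b^2) + 13/15 + b^2/10*((b^2-3*a^2)/(a^2+b^2)^3 + (b^2-3*(1-a)^2)/((1-a)^2+b^2)^3)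

noncomputable def Fb (a b : ℝ) : ℝ := -(a^2*(1-a)^2)/(2*b^3) + 4*b/15 - b/10*(a^2/(a^2+b^2)^2 + (1-a)^2/((1-a)^2+b^2)^2)

noncomputable def Fbb (a b : ℝ) : ℝ := 3*a^2*(1-a)^2/(2*b^4) + 4/15 - (1/10)*(a^2*(a^2-3*b^2)/(a^2+b^2)^3 + (1-a)^2*((1-a)^2-3*b^2)/((1-a)^2+b^2)^3)

lemma hasDerivAt_L4_a (b : ℝ) (hb : b ≠ 0) (x : ℝ) :
    HasDerivAt (fun y => L4 y b) (Fa x b) x := by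
  have h1 : x^2 + b^2 ≠ 0 := by positivity
  have h2 : (1-x)^2 + b^2 ≠ 0 := by positivity
  have d1 := ((hasDerivAt_pow 2 x).mul (((hasDerivAt_id x).const_sub 1).pow 2)).div_const (4*b^2)
  have d2 := ((hasDerivAt_const x (11:ℝ)).sub (((hasDerivAt_id x).const_mul 26).mul ((hasDerivAt_id x).const_sub 1))).div_const 60
  have d3 := hasDerivAt_const x (2*b^2/15 : ℝ)
  have d4 := (hasDerivAt_const x (b^2)).div ((hasDerivAt_pow 2 x).add_const (b^2)) h1
  have d5 := (hasDerivAt_const x (b^2)).div ((((hasDerivAt_id x).const_sub 1).pow 2).add_const (b^2)) h2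
  have dd := ((d1.add d2).add d3).sub ((d4.add d5).const_mul (1/20))
  convert dd using 1
  · rfl
  · rfl
  · rfl
  simp only [Fa, id, Pi.pow_apply, Pi.mul_apply, Pi.sub_apply]
  field_simp
  ring

lemma hasDerivAt_Fa (b : ℝ) (hb : b ≠ 0) (x : ℝ) :
    HasDerivAt (fun y => Fa y b) (Faa x b) x := by
  have h1 : x^2 + b^2 ≠ 0 := by positivity
  have h2 : (1-x)^2 + b^2 ≠ 0 := by positivity
  have e1 := (((hasDerivAt_id x).const_mul 2).const_sub 1).mul
    ((((hasDerivAt_id x).mul ((hasDerivAt_id x).const_sub 1)).div_const (2*b^2)).sub_const (13/30))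
  have e2a := (hasDerivAt_id x).div (((hasDerivAt_pow 2 x).add_const (b^2)).pow 2) (pow_ne_zero 2 h1)
  have e2b := ((hasDerivAt_id x).const_sub 1).div
    ((((((hasDerivAt_id x).const_sub 1).pow 2).add_const (b^2))).pow 2) (pow_ne_zero 2 h2)
  have dd := e1.add ((e2a.sub e2b).const_mul (b^2/10))
  convert dd using 1
  · rfl
  · rfl
  · rfl
  simp only [Faa, id, Pi.pow_apply, Pi.mul_apply, Pi.sub_apply]
  field_simp
  ring

lemma hasDerivAt_L4_b (a y : ℝ) (hy : 0 < y) :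
    HasDerivAt (L4 a) (Fb a y) y := by
  have h1 : a^2 + y^2 ≠ 0 := by positivity
  have h2 : (1-a)^2 + y^2 ≠ 0 := by positivity
  have h4 : (4:ℝ)*y^2 ≠ 0 := by positivity
  have d1 := (hasDerivAt_const y (a^2*(1-a)^2)).div ((hasDerivAt_pow 2 y).const_mul 4) h4
  have d2 := hasDerivAt_const y ((11 - 26*a*(1-a))/60 : ℝ)
  have d3 := ((hasDerivAt_pow 2 y).const_mul 2).div_const 15
  have d4 := (hasDerivAt_pow 2 y).div ((hasDerivAt_pow 2 y).const_add (a^2)) h1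
  have d5 := (hasDerivAt_pow 2 y).div ((hasDerivAt_pow 2 y).const_add ((1-a)^2)) h2
  have dd := ((d1.add d2).add d3).sub ((d4.add d5).const_mul (1/20))
  convert dd using 1
  · rfl
  · rfl
  · rfl
  simp only [Fb, id]
  field_simp
  ring

lemma hasDerivAt_Fb (a y : ℝ) (hy : 0 < y) :
    HasDerivAt (Fb a) (Fbb a y) y := by
  have h1 : a^2 + y^2 ≠ 0 := by positivity
  have h2 : (1-a)^2 + y^2 ≠ 0 := by positivity
  have d1 := (hasDerivAt_const y (-(a^2*(1-a)^2))).div ((hasDerivAt_pow 3 y).const_mul 2) (by positivity)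
  have d2 := ((hasDerivAt_id y).const_mul 4).div_const 15
  have i1 := (hasDerivAt_const y (a^2)).div (((hasDerivAt_pow 2 y).const_add (a^2)).pow 2) (pow_ne_zero 2 h1)
  have i2 := (hasDerivAt_const y ((1-a)^2)).div (((hasDerivAt_pow 2 y).const_add ((1-a)^2)).pow 2) (pow_ne_zero 2 h2)
  have dd := (d1.add d2).sub (((hasDerivAt_id y).div_const 10).mul (i1.add i2))
  convert dd using 1
  · rfl
  · rfl
  · rfl
  simp only [Fbb, id, Pi.pow_apply, Pi.mul_apply, Pi.sub_apply, Pi.div_apply, Pi.add_apply]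
  field_simp
  ring

/-! Quadratic facts in h = b^2/(1/4+b^2). -/

lemma hfact_Q1 (h t : ℝ) (he : h*(1/4+t) = t) (h0 : 0 ≤ h) (h45 : h ≤ 4/5) (ht : 0 ≤ t) :
    3*h/20 < 1/40 + 23*t/90 := by
  have hz : t*(1-h) - h/4 = 0 := by nlinarith [he]
  have key : (1/40 + 23*t/90 - 3*h/20)*(1-h)
      = 3/20*(h-10/27)^2 + 43/9720 + 23/90*(t*(1-h)-h/4) := by ring
  have h1h : (0:ℝ) < 1 - h := by linarith
  nlinarith [key, hz, sq_nonneg (h-10/27), h1h]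

lemma hfact_Q2 (h t : ℝ) (he : h*(1/4+t) = t) (h0 : 0 ≤ h) (h45 : h ≤ 4/5) (ht : 0 ≤ t) :
    3*h/20 < 1/40 + 2*t/5 := by
  have hz : t*(1-h) - h/4 = 0 := by nlinarith [he]
  have key : (1/40 + 2*t/5 - 3*h/20)*(1-h)
      = 3/20*(h-1/4)^2 + 1/64 + 2/5*(t*(1-h)-h/4) := by ring
  have h1h : (0:ℝ) < 1 - h := by linarith
  nlinarith [key, hz, sq_nonneg (h-1/4), h1h]

lemma hfact_Q3 (h t : ℝ) (he : h*(1/4+t) = t) (h0 : 0 ≤ h) (h45 : h ≤ 4/5) (ht : 0 ≤ t) :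
    3*h/20 < 3/40 + 2*t/15 := by
  have hz : t*(1-h) - h/4 = 0 := by nlinarith [he]
  have key : (3/40 + 2*t/15 - 3*h/20)*(1-h)
      = 3/20*(h-23/36)^2 + 119/8640 + 2/15*(t*(1-h)-h/4) := by ring
  have h1h : (0:ℝ) < 1 - h := by linarith
  nlinarith [key, hz, sq_nonneg (h-23/36), h1h]

lemma hfact_Q4 (h t : ℝ) (he : h*(1/4+t) = t) (h0 : 0 ≤ h) (h45 : h ≤ 4/5) (ht : 0 ≤ t) :
    h^3/10 + 9*h/20 < 3/8 + 8*t/25 := by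
  have c1 : h^3 ≤ 16*h/25 := by
    nlinarith [mul_nonneg (mul_nonneg h0 (by linarith : (0:ℝ) ≤ 4/5 - h)) (by linarith : (0:ℝ) ≤ 4/5 + h)]
  have c2 : h/4 ≤ t := by nlinarith [he, mul_nonneg h0 ht]
  linarith

lemma hfact_Q5 (h t : ℝ) (he : h*(1/4+t) = t) (h0 : 0 ≤ h) (h45 : h ≤ 4/5) (ht : 0 ≤ t) :
    169*h/320 < 47/320 + 14*t/15 := by
  have hz : t*(1-h) - h/4 = 0 := by nlinarith [he]
  have key : (47/320 + 14*t/15 - 169*h/320)*(1-h)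
      = 169/320*(h-212/507)^2 + 26543/486720 + 14/15*(t*(1-h)-h/4) := by ring
  have h1h : (0:ℝ) < 1 - h := by linarith
  nlinarith [key, hz, sq_nonneg (h-212/507), h1h]

section Ineqs

variable {a b : ℝ}

lemma L4_lb (ha0 : 0 ≤ a) (ha : a ≤ 1/2) (hb0 : 0 < b) (hb : b ≤ 1) :
    a^2*(1-a)^2/(4*b^2) + (8 - 26*(a*(1-a)))/60 + 2*b^2/15 - (b^2/(1/4+b^2))/20 ≤ L4 a b := by
  have h1 : (0:ℝ) < a^2 + b^2 := by positivity
  have h2 : (0:ℝ) < (1-a)^2 + b^2 := by positivity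
  have hD : (0:ℝ) < 1/4 + b^2 := by positivity
  have e1 : b^2/(a^2+b^2) ≤ 1 := by
    rw [div_le_one h1]; nlinarith [sq_nonneg a]
  have e2 : b^2/((1-a)^2+b^2) ≤ b^2/(1/4+b^2) := by
    apply div_le_div_of_nonneg_left (by positivity) hD
    nlinarith
  simp only [L4]
  nlinarith [e1, e2]

lemma ineq_a (ha0 : 0 ≤ a) (ha : a ≤ 1/2) (hb0 : 0 < b) (hb : b ≤ 1) :
    |Fa a b| < 3/b * L4 a b := by
  have hb2 : (0:ℝ) < b^2 := by positivity
  have h1 : (0:ℝ) < a^2 + b^2 := by positivity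
  have h2 : (0:ℝ) < (1-a)^2 + b^2 := by positivity
  have hD : (0:ℝ) < 1/4 + b^2 := by positivity
  set h := b^2/(1/4+b^2) with hhdef
  have hh_eq : h * (1/4+b^2) = b^2 := by rw [hhdef]; exact div_mul_cancel₀ _ hD.ne'
  have hh0 : 0 ≤ h := by positivity
  have hh45 : h ≤ 4/5 := by rw [hhdef, div_le_iff₀ hD]; nlinarith [mul_nonneg (sub_nonneg.mpr hb) (by linarith : (0:ℝ) ≤ 1+b)]
  have hL := L4_lb ha0 ha hb0 hb
  have ha1 : 0 ≤ 1 - a := by linarith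
  have hs0 : 0 ≤ 1 - 2*a := by linarith
  have hA : a/(a^2+b^2)^2 ≤ 1/(2*b^3) := by
    rw [div_le_div_iff₀ (by positivity) (by positivity)]
    nlinarith [mul_nonneg (by positivity : (0:ℝ) ≤ a^2+b^2) (sq_nonneg (a-b)),
      mul_nonneg (mul_nonneg (mul_nonneg ha0 ha0) ha0) hb0.le]
  have hB : (1-a)/((1-a)^2+b^2)^2 ≤ 1/(2*b^3) := by
    rw [div_le_div_iff₀ (by positivity) (by positivity)]
    nlinarith [mul_nonneg (by positivity : (0:ℝ) ≤ (1-a)^2+b^2) (sq_nonneg ((1-a)-b)),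
      mul_nonneg (mul_nonneg (mul_nonneg ha1 ha1) ha1) hb0.le]
  have hA0 : 0 ≤ a/(a^2+b^2)^2 := by positivity
  have hB0 : 0 ≤ (1-a)/((1-a)^2+b^2)^2 := by positivity
  have habs2 : |b^2/10*(a/(a^2+b^2)^2 - (1-a)/((1-a)^2+b^2)^2)| ≤ 1/(20*b) := by
    have hX : |a/(a^2+b^2)^2 - (1-a)/((1-a)^2+b^2)^2| ≤ 1/(2*b^3) :=
      abs_le.mpr ⟨by linarith, by linarith⟩
    calc |b^2/10*(a/(a^2+b^2)^2 - (1-a)/((1-a)^2+b^2)^2)|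
        = b^2/10 * |a/(a^2+b^2)^2 - (1-a)/((1-a)^2+b^2)^2| := by
          rw [abs_mul, abs_of_nonneg (by positivity : (0:ℝ) ≤ b^2/10)]
      _ ≤ b^2/10 * (1/(2*b^3)) := mul_le_mul_of_nonneg_left hX (by positivity)
      _ = 1/(20*b) := by field_simp; ring
  have habs : |Fa a b| ≤ (1-2*a)*|a*(1-a)/(2*b^2) - 13/30| + 1/(20*b) := by
    simp only [Fa]
    calc |(1-2*a)*(a*(1-a)/(2*b^2) - 13/30) + b^2/10*(a/(a^2+b^2)^2 - (1-a)/((1-a)^2+b^2)^2)|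
        ≤ |(1-2*a)*(a*(1-a)/(2*b^2) - 13/30)| + |b^2/10*(a/(a^2+b^2)^2 - (1-a)/((1-a)^2+b^2)^2)| :=
          abs_add_le _ _
      _ ≤ (1-2*a)*|a*(1-a)/(2*b^2) - 13/30| + 1/(20*b) := by
          rw [abs_mul, abs_of_nonneg hs0]; linarith
  have hT1 : 0 ≤ a^2*(1-a)^2/(4*b^2) := by positivity
  have hX0 : 0 ≤ a*(1-a)/(2*b^2) := by positivity
  rcases le_total (a*(1-a)/(2*b^2)) (13/30) with hc | hc
  · have habs' : |Fa a b| ≤ (1-2*a)*(13/30) + 1/(20*b) := by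
      have e : |a*(1-a)/(2*b^2) - 13/30| = 13/30 - a*(1-a)/(2*b^2) := by
        rw [abs_of_nonpos (by linarith)]; ring
      have h3 : (1-2*a)*|a*(1-a)/(2*b^2) - 13/30| ≤ (1-2*a)*(13/30) := by
        rw [e]; apply mul_le_mul_of_nonneg_left _ hs0; linarith
      linarith
    refine lt_of_le_of_lt habs' ?_
    rw [div_mul_eq_mul_div, lt_div_iff₀ hb0]
    have hexp : ((1-2*a)*(13/30) + 1/(20*b)) * b = 13*(1-2*a)*b/30 + 1/20 := by
      field_simp
    rw [hexp]
    have hW := hfact_Q1 h (b^2) hh_eq hh0 hh45 (by positivity)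
    have hsq1 : 13*(1-2*a)*b/30 ≤ 13*(1-2*a)^2/40 + 13*b^2/90 := by
      nlinarith [sq_nonneg (1-2*a - 2*b/3)]
    linarith [hL, hW, hsq1, hT1]
  · have habs' : |Fa a b| ≤ (1-2*a)*(a*(1-a)/(2*b^2)) + 1/(20*b) := by
      have e : |a*(1-a)/(2*b^2) - 13/30| = a*(1-a)/(2*b^2) - 13/30 := by
        rw [abs_of_nonneg (by linarith)]
      have h3 : (1-2*a)*|a*(1-a)/(2*b^2) - 13/30| ≤ (1-2*a)*(a*(1-a)/(2*b^2)) := by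
        rw [e]; apply mul_le_mul_of_nonneg_left _ hs0; linarith
      linarith
    refine lt_of_le_of_lt habs' ?_
    rw [div_mul_eq_mul_div, lt_div_iff₀ hb0]
    have hexp : ((1-2*a)*(a*(1-a)/(2*b^2)) + 1/(20*b)) * b
        = (1-2*a)*(a*(1-a))/(2*b) + 1/20 := by
      field_simp
    rw [hexp]
    have hamgm : (1-2*a)*(a*(1-a))/(2*b) ≤ 3*(a^2*(1-a)^2/(4*b^2)) + (1-2*a)^2/12 := by
      have key : 3*(a^2*(1-a)^2/(4*b^2)) + (1-2*a)^2/12 - (1-2*a)*(a*(1-a))/(2*b)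
          = (3*(a*(1-a)) - (1-2*a)*b)^2/(12*b^2) := by field_simp; ring
      nlinarith [key, div_nonneg (sq_nonneg (3*(a*(1-a)) - (1-2*a)*b)) (by positivity : (0:ℝ) ≤ 12*b^2)]
    have hW := hfact_Q2 h (b^2) hh_eq hh0 hh45 (by positivity)
    linarith [hL, hW, hamgm, sq_nonneg (1-2*a)]

lemma ineq_b (ha0 : 0 ≤ a) (ha : a ≤ 1/2) (hb0 : 0 < b) (hb : b ≤ 1) :
    |Fb a b| < 3/b * L4 a b := by
  have hb2 : (0:ℝ) < b^2 := by positivity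
  have h1 : (0:ℝ) < a^2 + b^2 := by positivity
  have h2 : (0:ℝ) < (1-a)^2 + b^2 := by positivity
  have hD : (0:ℝ) < 1/4 + b^2 := by positivity
  set h := b^2/(1/4+b^2) with hhdef
  have hh_eq : h * (1/4+b^2) = b^2 := by rw [hhdef]; exact div_mul_cancel₀ _ hD.ne'
  have hh0 : 0 ≤ h := by positivity
  have hh45 : h ≤ 4/5 := by rw [hhdef, div_le_iff₀ hD]; nlinarith [mul_nonneg (sub_nonneg.mpr hb) (by linarith : (0:ℝ) ≤ 1+b)]
  have hL := L4_lb ha0 ha hb0 hb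
  have hp14 : a*(1-a) ≤ 1/4 := by nlinarith [sq_nonneg (1-2*a)]
  have hA2 : a^2/(a^2+b^2)^2 ≤ 1/(4*b^2) := by
    rw [div_le_div_iff₀ (by positivity) (by positivity)]
    nlinarith [sq_nonneg (a^2 - b^2)]
  have hB2 : (1-a)^2/((1-a)^2+b^2)^2 ≤ 1/(4*b^2) := by
    rw [div_le_div_iff₀ (by positivity) (by positivity)]
    nlinarith [sq_nonneg ((1-a)^2 - b^2)]
  have hA20 : 0 ≤ a^2/(a^2+b^2)^2 := by positivity
  have hB20 : 0 ≤ (1-a)^2/((1-a)^2+b^2)^2 := by positivity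
  have hsum : b/10*(a^2/(a^2+b^2)^2 + (1-a)^2/((1-a)^2+b^2)^2) ≤ 1/(20*b) := by
    have h3 : b/10*(a^2/(a^2+b^2)^2 + (1-a)^2/((1-a)^2+b^2)^2) ≤ b/10*(1/(4*b^2)+1/(4*b^2)) := by
      apply mul_le_mul_of_nonneg_left _ (by positivity)
      linarith
    have e : b/10*(1/(4*b^2)+1/(4*b^2)) = 1/(20*b) := by field_simp; ring
    linarith [h3, e]
  have hsum0 : 0 ≤ b/10*(a^2/(a^2+b^2)^2 + (1-a)^2/((1-a)^2+b^2)^2) := by positivity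
  have hT1 : 0 ≤ a^2*(1-a)^2/(4*b^2) := by positivity
  rw [abs_lt]
  constructor
  · have hFb_lb : -(a^2*(1-a)^2/(2*b^3) + 1/(20*b)) ≤ Fb a b := by
      simp only [Fb]
      have h0 : 0 ≤ 4*b/15 := by positivity
      have e : -(a^2*(1-a)^2)/(2*b^3) = -(a^2*(1-a)^2/(2*b^3)) := by ring
      rw [e]
      linarith
    have key : a^2*(1-a)^2/(2*b^3) + 1/(20*b) < 3/b * L4 a b := by
      rw [div_mul_eq_mul_div, lt_div_iff₀ hb0]
      have hexp : (a^2*(1-a)^2/(2*b^3) + 1/(20*b)) * b = 2*(a^2*(1-a)^2/(4*b^2)) + 1/20 := by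
        field_simp; ring
      rw [hexp]
      have hW := hfact_Q2 h (b^2) hh_eq hh0 hh45 (by positivity)
      linarith [hL, hW, hT1, hp14]
    linarith
  · have hFb_ub : Fb a b ≤ 4*b/15 := by
      simp only [Fb]
      have e : -(a^2*(1-a)^2)/(2*b^3) ≤ 0 := by
        apply div_nonpos_of_nonpos_of_nonneg (by nlinarith [sq_nonneg (a*(1-a))]) (by positivity)
      linarith
    refine lt_of_le_of_lt hFb_ub ?_
    rw [div_mul_eq_mul_div, lt_div_iff₀ hb0]
    have hexp : 4*b/15 * b = 4*b^2/15 := by ring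
    rw [hexp]
    have hW := hfact_Q3 h (b^2) hh_eq hh0 hh45 (by positivity)
    linarith [hL, hW, hT1, hp14]

lemma ineq_aa {a' : ℝ} (ha0 : 0 ≤ a) (ha : a ≤ 1/2) (hb0 : 0 < b) (hb : b ≤ 1)
    (ha'0 : 0 ≤ a') (ha' : a' ≤ 1/2) (ha'a : |a' - a| ≤ b/50) :
    Faa a' b < 9/b^2 * L4 a b := by
  have hb2 : (0:ℝ) < b^2 := by positivity
  have h1 : (0:ℝ) < a'^2 + b^2 := by positivity
  have h2 : (0:ℝ) < (1-a')^2 + b^2 := by positivity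
  have hD : (0:ℝ) < 1/4 + b^2 := by positivity
  set h := b^2/(1/4+b^2) with hhdef
  have hh_eq : h * (1/4+b^2) = b^2 := by rw [hhdef]; exact div_mul_cancel₀ _ hD.ne'
  have hh0 : 0 ≤ h := by positivity
  have hh45 : h ≤ 4/5 := by rw [hhdef, div_le_iff₀ hD]; nlinarith [mul_nonneg (sub_nonneg.mpr hb) (by linarith : (0:ℝ) ≤ 1+b)]
  have hL := L4_lb ha0 ha hb0 hb
  have hT1 : 0 ≤ a^2*(1-a)^2/(4*b^2) := by positivity
  rw [div_mul_eq_mul_div, lt_div_iff₀ hb2, mul_comm (Faa a' b) (b^2)]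
  have e1 : (b^2-3*a'^2)/(a'^2+b^2)^3 ≤ 1/b^4 := by
    rw [div_le_div_iff₀ (by positivity) (by positivity)]
    nlinarith [sq_nonneg (a'^3), sq_nonneg (a'^2*b), sq_nonneg (a'*b^2)]
  have e2 : (b^2-3*(1-a')^2)/((1-a')^2+b^2)^3 ≤ b^2/((1/4+b^2)^3) := by
    apply div_le_div₀ (by positivity) (by nlinarith [sq_nonneg (1-a')]) (by positivity)
    apply pow_le_pow_left₀ (by positivity)
    nlinarith
  have hFaa_eq : b^2 * Faa a' b = (1-6*a'+6*a'^2)/2 + 13*b^2/15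
      + b^4/10*((b^2-3*a'^2)/(a'^2+b^2)^3 + (b^2-3*(1-a')^2)/((1-a')^2+b^2)^3) := by
    simp only [Faa]; field_simp
  have e4 : b^4/10*(1/b^4 + b^2/((1/4+b^2)^3)) = 1/10 + h^3/10 := by
    rw [hhdef]; field_simp
  have hUB : b^2 * Faa a' b ≤ (1-6*a'+6*a'^2)/2 + 13*b^2/15 + 1/10 + h^3/10 := by
    rw [hFaa_eq]
    have h5 := mul_le_mul_of_nonneg_left (add_le_add e1 e2) (by positivity : (0:ℝ) ≤ b^4/10)
    linarith [h5, e4]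
  have hs'0 : 0 ≤ 1-2*a' := by linarith
  have habs := abs_le.mp ha'a
  have hs'ub : 1-2*a' ≤ (1-2*a) + b/25 := by linarith [habs.1]
  have hss : (1-2*a')^2 ≤ ((1-2*a)+b/25)^2 := by
    apply pow_le_pow_left₀ hs'0 hs'ub
  have hW := hfact_Q4 h (b^2) hh_eq hh0 hh45 (by positivity)
  have hsq2 : 3*(1-2*a)*b/50 ≤ 9*(1-2*a)^2/40 + b^2/250 := by
    nlinarith [sq_nonneg (1-2*a - 2*b/15)]
  linarith [hL, hUB, hss, hW, hsq2, hT1]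

lemma ineq_bb {b' : ℝ} (ha0 : 0 ≤ a) (ha : a ≤ 1/2) (hb0 : 0 < b) (hb : b ≤ 1)
    (hb'0 : 0 < b') (hb' : b' ≤ 1) (hb'b : |b' - b| ≤ b/50) :
    Fbb a b' < 9/b^2 * L4 a b := by
  have hb2 : (0:ℝ) < b^2 := by positivity
  have hq1 : (0:ℝ) < a^2 + b'^2 := by positivity
  have hq2 : (0:ℝ) < (1-a)^2 + b'^2 := by positivity
  have hD : (0:ℝ) < 1/4 + b^2 := by positivity
  set h := b^2/(1/4+b^2) with hhdef
  have hh_eq : h * (1/4+b^2) = b^2 := by rw [hhdef]; exact div_mul_cancel₀ _ hD.ne'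
  have hh0 : 0 ≤ h := by positivity
  have hh45 : h ≤ 4/5 := by rw [hhdef, div_le_iff₀ hD]; nlinarith [mul_nonneg (sub_nonneg.mpr hb) (by linarith : (0:ℝ) ≤ 1+b)]
  have hL := L4_lb ha0 ha hb0 hb
  have hT1 : 0 ≤ a^2*(1-a)^2/(4*b^2) := by positivity
  have habs := abs_le.mp hb'b
  have hb'lb : 49*b/50 ≤ b' := by linarith [habs.1]
  have hp14 : a*(1-a) ≤ 1/4 := by nlinarith [sq_nonneg (1-2*a)]
  rw [div_mul_eq_mul_div, lt_div_iff₀ hb2, mul_comm (Fbb a b') (b^2)]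
  have hpow : (49*b/50)^4 ≤ b'^4 := by
    apply pow_le_pow_left₀ (by positivity) hb'lb
  have hb'2 : 24*b^2/25 ≤ b'^2 := by nlinarith [hb'lb, hb0.le]
  have hFbb_eq : b^2 * Fbb a b' = 3*a^2*(1-a)^2*b^2/(2*b'^4) + 4*b^2/15
      - b^2/10*(a^2*(a^2-3*b'^2)/(a^2+b'^2)^3 + (1-a)^2*((1-a)^2-3*b'^2)/((1-a)^2+b'^2)^3) := by
    simp only [Fbb]; field_simp
  have u1 : 3*a^2*(1-a)^2*b^2/(2*b'^4) ≤ 75*(a^2*(1-a)^2)/(46*b^2) := by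
    rw [div_le_div_iff₀ (by positivity) (by positivity)]
    nlinarith [mul_nonneg (mul_nonneg (sq_nonneg a) (sq_nonneg (1-a))) (sub_nonneg.mpr hpow),
      mul_nonneg (mul_nonneg (sq_nonneg a) (sq_nonneg (1-a))) (pow_nonneg hb0.le 4)]
  have c1 : -(3/(4*(a^2+b'^2))) ≤ a^2*(a^2-3*b'^2)/(a^2+b'^2)^3 := by
    have key : a^2*(a^2-3*b'^2)/(a^2+b'^2)^3 + 3/(4*(a^2+b'^2))
        = (3*(a^2-b'^2)^2 + 4*a^4)/(4*(a^2+b'^2)^3) := by field_simp; ring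
    nlinarith [key, div_nonneg (by positivity : (0:ℝ) ≤ 3*(a^2-b'^2)^2 + 4*a^4)
      (by positivity : (0:ℝ) ≤ 4*(a^2+b'^2)^3)]
  have c2 : -(3/(4*((1-a)^2+b'^2))) ≤ (1-a)^2*((1-a)^2-3*b'^2)/((1-a)^2+b'^2)^3 := by
    have key : (1-a)^2*((1-a)^2-3*b'^2)/((1-a)^2+b'^2)^3 + 3/(4*((1-a)^2+b'^2))
        = (3*((1-a)^2-b'^2)^2 + 4*(1-a)^4)/(4*((1-a)^2+b'^2)^3) := by field_simp; ring
    nlinarith [key, div_nonneg (by positivity : (0:ℝ) ≤ 3*((1-a)^2-b'^2)^2 + 4*(1-a)^4)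
      (by positivity : (0:ℝ) ≤ 4*((1-a)^2+b'^2)^3)]
  -- bound the two 3/(4 Q) terms
  have t1 : 3/(4*(a^2+b'^2)) ≤ 3/(4*(24*b^2/25)) := by
    apply div_le_div_of_nonneg_left (by norm_num) (by positivity)
    nlinarith [sq_nonneg a, hb'2]
  have t2 : 3/(4*((1-a)^2+b'^2)) ≤ (25/24)*(3/(4*(1/4+b^2))) := by
    have hd : (24/25)*(1/4+b^2) ≤ (1-a)^2+b'^2 := by nlinarith [hb'2]
    have h6 : 3/(4*((1-a)^2+b'^2)) ≤ 3/(4*((24/25)*(1/4+b^2))) := by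
      apply div_le_div_of_nonneg_left (by norm_num) (by positivity)
      nlinarith [hd]
    have e6 : 3/(4*((24/25)*(1/4+b^2))) = (25/24)*(3/(4*(1/4+b^2))) := by
      field_simp
    linarith [h6, e6]
  have e5 : b^2/10*(3/(4*(24*b^2/25))) = 5/64 := by field_simp; ring
  have e7 : b^2/10*((25/24)*(3/(4*(1/4+b^2)))) = 5*h/64 := by
    rw [hhdef]; field_simp; ring
  have hUB : b^2 * Fbb a b' ≤ 75*(a^2*(1-a)^2)/(46*b^2) + 4*b^2/15 + 5/64 + 5*h/64 := by
    rw [hFbb_eq]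
    have hneg : -(a^2*(a^2-3*b'^2)/(a^2+b'^2)^3 + (1-a)^2*((1-a)^2-3*b'^2)/((1-a)^2+b'^2)^3)
        ≤ 3/(4*(24*b^2/25)) + (25/24)*(3/(4*(1/4+b^2))) := by linarith
    have h7 : -(b^2/10*(a^2*(a^2-3*b'^2)/(a^2+b'^2)^3 + (1-a)^2*((1-a)^2-3*b'^2)/((1-a)^2+b'^2)^3))
        ≤ b^2/10*(3/(4*(24*b^2/25)) + (25/24)*(3/(4*(1/4+b^2)))) := by
      rw [← mul_neg]
      apply mul_le_mul_of_nonneg_left hneg (by positivity)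
    linarith [u1, h7, e5, e7]
  have hmono : 75*(a^2*(1-a)^2)/(46*b^2) ≤ 9*(a^2*(1-a)^2/(4*b^2)) := by
    have key : 9*(a^2*(1-a)^2/(4*b^2)) - 75*(a^2*(1-a)^2)/(46*b^2)
        = 57*(a^2*(1-a)^2)/(92*b^2) := by field_simp; ring
    nlinarith [key, div_nonneg (by positivity : (0:ℝ) ≤ 57*(a^2*(1-a)^2)) (by positivity : (0:ℝ) ≤ 92*b^2)]
  have hW := hfact_Q5 h (b^2) hh_eq hh0 hh45 (by positivity)
  linarith [hL, hUB, hmono, hW, hp14]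

end Ineqs

theorem L4_deriv_bounds (a b a' b' : ℝ)
    (ha0 : 0 ≤ a) (ha : a ≤ 1/2) (hb0 : 0 < b) (hb : b ≤ 1)
    (ha'0 : 0 ≤ a') (ha' : a' ≤ 1/2) (ha'a : |a' - a| ≤ b/50)
    (hb'0 : 0 < b') (hb' : b' ≤ 1) (hb'b : |b' - b| ≤ b/50) :
    |deriv (fun x => L4 x b) a| < 3/b * L4 a b ∧
    deriv (deriv (fun x => L4 x b)) a' < 9/b^2 * L4 a b ∧
    |deriv (L4 a) b| < 3/b * L4 a b ∧
    deriv (deriv (L4 a)) b' < 9/b^2 * L4 a b := by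
  have hbne : b ≠ 0 := ne_of_gt hb0
  have hda : deriv (fun x => L4 x b) a = Fa a b := (hasDerivAt_L4_a b hbne a).deriv
  have hderiv1 : deriv (fun x => L4 x b) = fun x => Fa x b :=
    funext fun x => (hasDerivAt_L4_a b hbne x).deriv
  have hdaa : deriv (deriv (fun x => L4 x b)) a' = Faa a' b := by
    rw [hderiv1]; exact (hasDerivAt_Fa b hbne a').deriv
  have hdb : deriv (L4 a) b = Fb a b := (hasDerivAt_L4_b a b hb0).deriv
  have hdbb : deriv (deriv (L4 a)) b' = Fbb a b' := by
    have hev : deriv (L4 a) =ᶠ[nhds b'] fun y => Fb a y := by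
      filter_upwards [eventually_gt_nhds hb'0] with y hy
      exact (hasDerivAt_L4_b a y hy).deriv
    rw [Filter.EventuallyEq.deriv_eq hev]
    exact (hasDerivAt_Fb a b' hb'0).deriv
  refine ⟨?_, ?_, ?_, ?_⟩
  · rw [hda]; exact ineq_a ha0 ha hb0 hb
  · rw [hdaa]; exact ineq_aa ha0 ha hb0 hb ha'0 ha' ha'a
  · rw [hdb]; exact ineq_b ha0 ha hb0 hb
  · rw [hdbb]; exact ineq_bb ha0 ha hb0 hb hb'0 hb' hb'b
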